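/- arXiv:1310.4637 — 2 statements merged into one kernel-verified Lean document; each statement's English description precedes it below -/
import Mathlib

section
/- For all integers n ≥ 0 and k ≥ 1, the Daehee number of order k satisfies D_n^(k) = Σ_{l=0}^n S_1(n,l) B_l^{(k)}, where S_1 denotes the signed Stirling numbers of the first kind and B_l^{(k)} are the Bernoulli numbers of order k. -/
open PowerSeries Polynomial Finset

/-- `log(1+t) = Σ_{n≥1} (-1)^{n+1} t^n / n` as a formal power series over ℚ. -/
noncomputable def logOneAdd : PowerSeries ℚ :=
  PowerSeries.mk fun n => if n = 0 then 0 else (-1) ^ (n + 1) / (n : ℚ)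

/-- `−log(1−t) = Σ_{n≥1} t^n / n` as a formal power series over ℚ. -/
noncomputable def negLogOneSub : PowerSeries ℚ :=
  PowerSeries.mk fun n => if n = 0 then 0 else 1 / (n : ℚ)

/-- `e^t = Σ_{n≥0} t^n / n!` as a formal power series over ℚ. -/
noncomputable def expQ : PowerSeries ℚ :=
  PowerSeries.mk fun n => 1 / (n.factorial : ℚ)

/-- `log(1+t)` as a formal power series with coefficients in ℚ[x]. -/
noncomputable def logOneAddP : PowerSeries (Polynomial ℚ) :=
  PowerSeries.mk fun n => Polynomial.C (if n = 0 then 0 else (-1) ^ (n + 1) / (n : ℚ))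

/-- `−log(1−t)` as a formal power series with coefficients in ℚ[x]. -/
noncomputable def negLogOneSubP : PowerSeries (Polynomial ℚ) :=
  PowerSeries.mk fun n => Polynomial.C (if n = 0 then 0 else 1 / (n : ℚ))

/-- `e^t` as a formal power series with coefficients in ℚ[x]. -/
noncomputable def expP : PowerSeries (Polynomial ℚ) :=
  PowerSeries.mk fun n => Polynomial.C (1 / (n.factorial : ℚ))

/-- `e^{xt} = Σ_{n≥0} x^n t^n / n!` as a formal power series with coefficients in ℚ[x]. -/
noncomputable def expXT : PowerSeries (Polynomial ℚ) :=
  PowerSeries.mk fun n => Polynomial.C (1 / (n.factorial : ℚ)) * Polynomial.X ^ n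

/-- The binomial polynomial `x(x−1)⋯(x−n+1)/n! ∈ ℚ[x]`. -/
noncomputable def binomPoly (n : ℕ) : Polynomial ℚ :=
  Polynomial.C (1 / (n.factorial : ℚ)) *
    ∏ i ∈ Finset.range n, (Polynomial.X - Polynomial.C (i : ℚ))

/-- `(1+t)^x = Σ_{n≥0} C(x,n) t^n` as a formal power series with coefficients in ℚ[x]. -/
noncomputable def onePlusTX : PowerSeries (Polynomial ℚ) :=
  PowerSeries.mk binomPoly

/-- `(1−t)^x = Σ_{n≥0} (−1)^n C(x,n) t^n` as a formal power series with coefficients in ℚ[x]. -/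
noncomputable def oneSubTX : PowerSeries (Polynomial ℚ) :=
  PowerSeries.mk fun n => (-1) ^ n * binomPoly n

/-!
Substituting `t ↦ log(1+t)` into `tᵏ = (eᵗ - 1)ᵏ ∑ B_l^{(k)} tˡ/l!` and using `e^{log(1+t)} = 1 + t`
gives `log(1+t)ᵏ = tᵏ ∑ B_l^{(k)} log(1+t)ˡ/l!`, so after cancelling `tᵏ` the exponential generating
function of `D^{(k)}` is that of `B^{(k)}` composed with `log(1+t)`. The coefficient of `tⁿ/n!` in
`log(1+t)ˡ/l!` is `S₁(n, l)`: both families are sent from `l + 1` to `l` by `(1+t) d/dt` (on the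
Stirling side this is `S₁(n+1, l+1) = S₁(n, l) - n S₁(n, l+1)`) and vanish at `t = 0` for `l ≥ 1`.
Both identities are proved by comparing derivatives and constant terms.
-/

open scoped Nat

namespace Polynomial

variable (R : Type*)

theorem coeff_descPochhammer_succ_succ [Ring R] (m l : ℕ) :
    (descPochhammer R (m + 1)).coeff (l + 1) =
      (descPochhammer R m).coeff l - m * (descPochhammer R m).coeff (l + 1) := by
  rw [descPochhammer_succ_right, mul_sub, coeff_sub, coeff_mul_X, coeff_mul_natCast,
    Nat.cast_comm]

theorem coeff_descPochhammer_zero [Ring R] (m : ℕ) :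
    (descPochhammer R m).coeff 0 = if m = 0 then 1 else 0 := by
  rw [coeff_zero_eq_eval_zero, descPochhammer_eval_zero]

theorem coeff_descPochhammer_eq_zero_of_lt [Ring R] [NoZeroDivisors R] [Nontrivial R] {m l : ℕ}
    (h : m < l) : (descPochhammer R m).coeff l = 0 :=
  coeff_eq_zero_of_natDegree_lt (by rwa [descPochhammer_natDegree])

theorem prod_range_X_sub_C_eq_descPochhammer [CommRing R] (m : ℕ) :
    ∏ i ∈ range m, (X - C (i : R)) = descPochhammer R m := by
  induction m with
  | zero => simp
  | succ m ih => rw [prod_range_succ, ih, descPochhammer_succ_right, map_natCast]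

end Polynomial

namespace PowerSeries

theorem coeff_X_mul_derivative {R : Type*} [CommSemiring R] (f : R⟦X⟧) (m : ℕ) :
    coeff m (X * d⁄dX R f) = m * coeff m f := by
  cases m with
  | zero => simp
  | succ m => rw [coeff_succ_X_mul, coeff_derivative, Nat.cast_succ, mul_comm]

theorem one_add_X_mul_derivative_log {A : Type*} [CommRing A] [Algebra ℚ A] :
    (1 + X) * d⁄dX A (log A) = 1 := by
  ext m
  cases m with
  | zero => simp [deriv_log]
  | succ m => simp [deriv_log, add_mul, coeff_succ_X_mul, pow_succ]

theorem one_add_X_mul_derivative_log_pow {A : Type*} [CommRing A] [Algebra ℚ A] (l : ℕ) :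
    (1 + X) * d⁄dX A (log A ^ (l + 1)) = (l + 1 : A) • log A ^ l := by
  rw [derivative_pow, Nat.add_sub_cancel, smul_eq_C_mul, map_add, map_natCast, map_one]
  push_cast
  linear_combination (l + 1 : A⟦X⟧) * log A ^ l * one_add_X_mul_derivative_log (A := A)

theorem exp_subst_log {K : Type*} [Field K] [CharZero K] : (exp K).subst (log K) = 1 + X := by
  set E := (exp K).subst (log K)
  have hlog : d⁄dX K (log K) = (1 + X)⁻¹ :=
    (eq_inv_iff_mul_eq_one (by simp)).2 (by rw [mul_comm, one_add_X_mul_derivative_log])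
  have hE : d⁄dX K E = E * (1 + X)⁻¹ := by
    rw [derivative_subst HasSubst.log, derivative_exp, hlog]
  have hE0 : constantCoeff E = 1 := by
    have h : E = 1 + (exp K - 1).subst (log K) := by
      rw [← coe_substAlgHom HasSubst.log, map_sub, map_one, add_sub_cancel, coe_substAlgHom]
    have h2 := constantCoeff_subst_eq_zero (constantCoeff_log (A := K)) (exp K - 1) (by simp)
    rw [h, map_add, map_one]
    exact add_eq_left.2 h2
  have hquot : E * (1 + X)⁻¹ = 1 := by
    refine derivative.ext ?_ ?_
    · rw [Derivation.leibniz, derivative_inv', hE, derivative_one, map_add, derivative_X,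
        derivative_one]
      simp only [smul_eq_mul]
      ring
    · simp [hE0]
  calc E = E * (1 + X)⁻¹ * (1 + X) := by
        rw [mul_assoc, PowerSeries.inv_mul_cancel _ (by simp), mul_one]
    _ = 1 + X := by rw [hquot, one_mul]

section Stirling

variable {K : Type*} [Field K]

variable (K) in
/-- `∑ₘ s(m, l) Xᵐ / m!` for the signed Stirling numbers `s(m, l)` of the first kind, which are the
coefficients of the falling factorial `descPochhammer K m`. -/
noncomputable def stirlingFirstEGF (l : ℕ) : K⟦X⟧ :=
  mk fun m => (descPochhammer K m).coeff l / m !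

theorem stirlingFirstEGF_zero : stirlingFirstEGF K 0 = 1 := by
  ext m
  by_cases hm : m = 0 <;> simp [stirlingFirstEGF, coeff_descPochhammer_zero, coeff_one, hm]

theorem constantCoeff_stirlingFirstEGF_succ (l : ℕ) :
    constantCoeff (stirlingFirstEGF K (l + 1)) = 0 := by
  simp [stirlingFirstEGF, ← coeff_zero_eq_constantCoeff_apply, Polynomial.coeff_one]

variable [CharZero K]

theorem one_add_X_mul_derivative_stirlingFirstEGF_succ (l : ℕ) :
    (1 + X) * d⁄dX K (stirlingFirstEGF K (l + 1)) = stirlingFirstEGF K l := by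
  ext m
  rw [add_mul, one_mul, map_add, coeff_X_mul_derivative, coeff_derivative]
  simp only [stirlingFirstEGF, coeff_mk, coeff_descPochhammer_succ_succ]
  rw [Nat.factorial_succ]
  push_cast
  field_simp
  ring

theorem stirlingFirstEGF_eq_smul_log_pow (l : ℕ) :
    stirlingFirstEGF K l = (l ! : K)⁻¹ • log K ^ l := by
  induction l with
  | zero => simp [stirlingFirstEGF_zero]
  | succ l ih =>
    refine derivative.ext (mul_left_cancel₀ (a := (1 + X : K⟦X⟧)) ?_ ?_) ?_
    · exact fun h => by simpa using congrArg constantCoeff h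
    · rw [one_add_X_mul_derivative_stirlingFirstEGF_succ, ih, Derivation.map_smul, mul_smul_comm,
        one_add_X_mul_derivative_log_pow, smul_smul, Nat.factorial_succ]
      push_cast
      field_simp
    · simp [constantCoeff_stirlingFirstEGF_succ]

theorem coeff_log_pow (l m : ℕ) :
    coeff m (log K ^ l) = l ! / m ! * (descPochhammer K m).coeff l := by
  rw [← smul_inv_smul₀ (Nat.cast_ne_zero.2 l.factorial_ne_zero : (l ! : K) ≠ 0) (log K ^ l),
    ← stirlingFirstEGF_eq_smul_log_pow, coeff_smul, stirlingFirstEGF, coeff_mk, smul_eq_mul]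
  ring

theorem subst_log_mk_div_factorial (b : ℕ → K) :
    (mk fun m => b m / m !).subst (log K) =
      mk fun m => (∑ l ∈ range (m + 1), (descPochhammer K m).coeff l * b l) / m ! := by
  ext m
  rw [coeff_subst' HasSubst.log, coeff_mk, sum_div,
    finsum_eq_sum_of_support_subset (s := range (m + 1))]
  · refine sum_congr rfl fun l _ => ?_
    have : (l ! : K) ≠ 0 := Nat.cast_ne_zero.2 l.factorial_ne_zero
    rw [coeff_mk, coeff_log_pow, smul_eq_mul]
    field_simp
  · intro l hl
    by_contra hlm
    simp only [coe_range, Set.mem_Iio, not_lt] at hlm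
    simp [coeff_log_pow, coeff_descPochhammer_eq_zero_of_lt K (by omega : m < l)] at hl

end Stirling

end PowerSeries

theorem logOneAdd_eq_log : logOneAdd = PowerSeries.log ℚ := by
  ext m
  simp [logOneAdd]

theorem expQ_eq_exp : expQ = PowerSeries.exp ℚ := by
  ext m
  simp [expQ]

theorem higher_order_daehee_eq_stirling_bernoulli_sum_general
    (k : ℕ) (n : ℕ)
    (D : ℕ → ℚ)
    (hD : logOneAdd ^ k
      = PowerSeries.X ^ k * PowerSeries.mk (fun m => D m / (m.factorial : ℚ)))
    (S1 : ℕ → ℕ → ℤ)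
    (hS1 : ∀ m : ℕ,
      (∏ i ∈ Finset.range m, (Polynomial.X - Polynomial.C (i : ℚ)))
        = ∑ l ∈ Finset.range (m + 1), Polynomial.C ((S1 m l : ℚ)) * Polynomial.X ^ l)
    (B : ℕ → ℚ)
    (hB : (PowerSeries.X : PowerSeries ℚ) ^ k
      = (expQ - 1) ^ k * PowerSeries.mk (fun m => B m / (m.factorial : ℚ))) :
    D n = ∑ l ∈ Finset.range (n + 1), (S1 n l : ℚ) * B l := by
  -- The general lemmas at `K = ℚ`, restated so that `Algebra ℚ ℚ` is `Algebra.id` as in `hB`.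
  have hexp_log : (exp ℚ).subst (log ℚ) = 1 + PowerSeries.X := exp_subst_log
  have hstirling : (PowerSeries.mk fun m => B m / m !).subst (log ℚ) =
      PowerSeries.mk fun m => (∑ l ∈ range (m + 1), (descPochhammer ℚ m).coeff l * B l) / m ! :=
    subst_log_mk_div_factorial B
  have hsubst := congrArg (substAlgHom (R := ℚ) (HasSubst.log (A := ℚ))) hB
  simp only [map_pow, map_mul, map_sub, map_one, coe_substAlgHom, subst_X HasSubst.log, expQ_eq_exp,
    hexp_log, add_sub_cancel_left] at hsubst
  rw [logOneAdd_eq_log] at hD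
  have hDB := congrArg (PowerSeries.coeff n) (X_pow_mul_cancel (hD.symm.trans hsubst))
  rw [hstirling, PowerSeries.coeff_mk, PowerSeries.coeff_mk, div_left_inj' (by positivity)] at hDB
  rw [hDB]
  refine sum_congr rfl fun l hl => ?_
  rw [← prod_range_X_sub_C_eq_descPochhammer, hS1]
  simp [Polynomial.coeff_X_pow, hl]

/-- For `n ≥ 0`, `k ≥ 1`, we have `D_n^(k) = Σ_{l=0}^n S_1(n,l) B_l^{(k)}`,
where `D_n^(k)` are the Daehee numbers of order `k`, `S_1` the signed Stirling numbers of
the first kind, and `B_l^{(k)}` the Bernoulli numbers of order `k`, defined by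
`(t/(e^t−1))^k = Σ_n B_n^{(k)} t^n/n!` (encoded multiplicatively). -/
theorem higher_order_daehee_eq_stirling_bernoulli_sum
    (k : ℕ) (hk : 1 ≤ k) (n : ℕ)
    (D : ℕ → ℚ)
    (hD : logOneAdd ^ k
      = PowerSeries.X ^ k * PowerSeries.mk (fun m => D m / (m.factorial : ℚ)))
    (S1 : ℕ → ℕ → ℤ)
    (hS1 : ∀ m : ℕ,
      (∏ i ∈ Finset.range m, (Polynomial.X - Polynomial.C (i : ℚ)))
        = ∑ l ∈ Finset.range (m + 1), Polynomial.C ((S1 m l : ℚ)) * Polynomial.X ^ l)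
    (B : ℕ → ℚ)
    (hB : (PowerSeries.X : PowerSeries ℚ) ^ k
      = (expQ - 1) ^ k * PowerSeries.mk (fun m => B m / (m.factorial : ℚ))) :
    D n = ∑ l ∈ Finset.range (n + 1), (S1 n l : ℚ) * B l :=
  higher_order_daehee_eq_stirling_bernoulli_sum_general k n D hD S1 hS1 B hB
end

section
/- For all integers n ≥ 1 and k ≥ 1, we have (−1)^n D_n^(k)(x)/n! = Σ_{m=1}^n (C(n−1, n−m)/m!) (−1)^m D̂_m^(k)(−x) as an identity of polynomials in x over ℚ, where D_n^(k)(x) are the Daehee polynomials of order k, D̂_m^(k)(x) are the Daehee polynomials of the second kind of order k, and C(n−1, n−m) is the binomial coefficient. -/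
open PowerSeries Polynomial Finset

/-!
Substitute `x ↦ -x` and then `t ↦ t/(1+t)` in the generating function of `D̂^(k)`. Since
`1 - t/(1+t) = (1+t)⁻¹`, the factor `(1 - t)^k` becomes `(1+t)^{-k}`, `-log(1 - t)` becomes
`log(1 + t)` and `(1 - t)^x` becomes `(1 + t)^x`. Hence the result is `(1+t)^{-k}` times the
generating function of `D^(k)`; cancelling `t^k (1+t)^{-k}` and comparing coefficients of `t^n`,
with `[t^n] (t/(1+t))^m = (-1)^(n-m) C(n-1, n-m)`, gives the identity.
-/

namespace PowerSeries

variable (R : Type*) [CommRing R]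

noncomputable def oneAddXInv : R⟦X⟧ := mk fun n => (-1) ^ n

noncomputable def xDivOneAddX : R⟦X⟧ := X * oneAddXInv R

variable {R} {S : Type*} [CommRing S]

theorem one_add_X_mul_oneAddXInv : (1 + X) * oneAddXInv R = 1 := by
  ext (_ | n)
  · simp [oneAddXInv]
  · simp [oneAddXInv, add_mul, coeff_succ_X_mul, pow_succ, coeff_one]

theorem isUnit_oneAddXInv : IsUnit (oneAddXInv R) :=
  IsUnit.of_mul_eq_one (1 + X) (by rw [mul_comm, one_add_X_mul_oneAddXInv])

theorem oneAddXInv_eq_rescale : oneAddXInv R = rescale (-1) (mk 1) := by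
  simp [oneAddXInv, rescale_mk]

theorem coeff_oneAddXInv_pow {m : ℕ} (hm : 0 < m) (j : ℕ) :
    coeff j (oneAddXInv R ^ m) = (-1) ^ j * ((m - 1 + j).choose j : R) := by
  obtain ⟨d, rfl⟩ := Nat.exists_eq_add_of_lt hm
  rw [oneAddXInv_eq_rescale, ← map_pow, zero_add, mk_one_pow_eq_mk_choose_add, coeff_rescale,
    coeff_mk, Nat.choose_symm_add, add_tsub_cancel_right]

theorem map_oneAddXInv (h : R →+* S) : map h (oneAddXInv R) = oneAddXInv S := by
  refine PowerSeries.ext fun n => ?_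
  simp [oneAddXInv]

theorem derivative_oneAddXInv : d⁄dX R (oneAddXInv R) = -oneAddXInv R ^ 2 := by
  have h := congrArg (d⁄dX R) (one_add_X_mul_oneAddXInv (R := R))
  rw [Derivation.leibniz, map_add, derivative_X, Derivation.map_one_eq_zero, zero_add,
    smul_eq_mul, smul_eq_mul] at h
  linear_combination oneAddXInv R * h - d⁄dX R (oneAddXInv R) * one_add_X_mul_oneAddXInv (R := R)

theorem one_sub_xDivOneAddX : 1 - xDivOneAddX R = oneAddXInv R := by
  rw [xDivOneAddX]
  linear_combination -one_add_X_mul_oneAddXInv (R := R)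

theorem constantCoeff_xDivOneAddX : constantCoeff (xDivOneAddX R) = 0 := by
  simp [xDivOneAddX]

theorem hasSubst_xDivOneAddX : HasSubst (xDivOneAddX R) :=
  HasSubst.of_constantCoeff_zero' constantCoeff_xDivOneAddX

theorem map_xDivOneAddX (h : R →+* S) : map h (xDivOneAddX R) = xDivOneAddX S := by
  rw [xDivOneAddX, map_mul, map_X, map_oneAddXInv, xDivOneAddX]

theorem derivative_xDivOneAddX : d⁄dX R (xDivOneAddX R) = oneAddXInv R ^ 2 := by
  rw [xDivOneAddX, Derivation.leibniz, derivative_oneAddXInv, derivative_X, smul_eq_mul,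
    smul_eq_mul]
  linear_combination -oneAddXInv R * one_add_X_mul_oneAddXInv (R := R)

theorem coeff_xDivOneAddX_pow_of_lt {m n : ℕ} (h : n < m) :
    coeff n (xDivOneAddX R ^ m) = 0 := by
  rw [xDivOneAddX, mul_pow, coeff_X_pow_mul', if_neg (by omega)]

theorem coeff_xDivOneAddX_pow {m n : ℕ} (hm : 0 < m) (h : m ≤ n) :
    coeff n (xDivOneAddX R ^ m) = (-1) ^ (n - m) * ((n - 1).choose (n - m) : R) := by
  rw [xDivOneAddX, mul_pow, coeff_X_pow_mul', if_pos h, coeff_oneAddXInv_pow hm]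
  congr 3
  omega

theorem map_subst_xDivOneAddX (h : R →+* S) (f : R⟦X⟧) :
    map h (f.subst (xDivOneAddX R)) = (map h f).subst (xDivOneAddX S) := by
  rw [← map_xDivOneAddX h]
  exact map_subst hasSubst_xDivOneAddX f

theorem one_sub_X_subst_xDivOneAddX : (1 - X : R⟦X⟧).subst (xDivOneAddX R) = oneAddXInv R := by
  rw [← coe_substAlgHom hasSubst_xDivOneAddX, map_sub, map_one, coe_substAlgHom,
    subst_X hasSubst_xDivOneAddX, one_sub_xDivOneAddX]

theorem invOneSubPow_subst_xDivOneAddX (a : ℕ) :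
    (invOneSubPow R a : R⟦X⟧).subst (xDivOneAddX R) = (1 + X) ^ a := by
  have h := congrArg (subst (xDivOneAddX R)) (invOneSubPow R a).val_inv
  rw [invOneSubPow_inv_eq_one_sub_pow, subst_mul hasSubst_xDivOneAddX,
    subst_pow hasSubst_xDivOneAddX, one_sub_X_subst_xDivOneAddX,
    ← coe_substAlgHom hasSubst_xDivOneAddX, map_one, coe_substAlgHom] at h
  set F : R⟦X⟧ := (invOneSubPow R a : R⟦X⟧).subst (xDivOneAddX R)
  calc F = F * ((1 + X) * oneAddXInv R) ^ a := by
        rw [one_add_X_mul_oneAddXInv, one_pow, mul_one]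
    _ = (1 + X) ^ a * (F * oneAddXInv R ^ a) := by rw [mul_pow]; ring
    _ = (1 + X) ^ a := by rw [h, mul_one]

theorem coeff_subst_xDivOneAddX (f : R⟦X⟧) (n : ℕ) :
    coeff n (f.subst (xDivOneAddX R))
      = ∑ m ∈ range (n + 1), coeff m f * coeff n (xDivOneAddX R ^ m) := by
  rw [coeff_subst' hasSubst_xDivOneAddX]
  refine finsum_eq_sum_of_support_subset _ fun m hm => ?_
  by_contra hmn
  rw [coe_range, Set.mem_Iio, not_lt] at hmn
  exact hm (by dsimp only; rw [coeff_xDivOneAddX_pow_of_lt (by omega), smul_zero])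

theorem neg_one_pow_mul_coeff_subst_xDivOneAddX (f : R⟦X⟧) {n : ℕ} (hn : 0 < n) :
    (-1) ^ n * coeff n (f.subst (xDivOneAddX R))
      = ∑ m ∈ Icc 1 n, (-1) ^ m * ((n - 1).choose (n - m) : R) * coeff m f := by
  rw [coeff_subst_xDivOneAddX, range_eq_Ico, sum_eq_sum_Ico_succ_bot (by omega), pow_zero,
    coeff_one, if_neg (by omega), mul_zero, zero_add, Ico_add_one_right_eq_Icc, mul_sum]
  refine sum_congr rfl fun m hm => ?_
  obtain ⟨hm1, hmn⟩ := mem_Icc.mp hm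
  obtain ⟨j, rfl⟩ := Nat.exists_eq_add_of_le hmn
  have hsq : ((-1 : R) ^ j) ^ 2 = 1 := by rw [← pow_mul, pow_mul', neg_one_sq, one_pow]
  rw [coeff_xDivOneAddX_pow hm1 hmn, Nat.add_sub_cancel_left, pow_add]
  linear_combination (-1) ^ m * ((m + j - 1).choose j : R) * coeff m f * hsq

end PowerSeries

theorem logOneAddP_eq_log : logOneAddP = PowerSeries.log ℚ[X] := by
  refine PowerSeries.ext fun n => ?_
  simp [logOneAddP, apply_ite Polynomial.C]

theorem derivative_logOneAddP : d⁄dX ℚ[X] logOneAddP = oneAddXInv ℚ[X] := by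
  rw [logOneAddP_eq_log, deriv_log]
  refine PowerSeries.ext fun n => ?_
  simp [oneAddXInv]

theorem derivative_negLogOneSubP : d⁄dX ℚ[X] negLogOneSubP = PowerSeries.mk 1 := by
  refine PowerSeries.ext fun n => ?_
  rw [PowerSeries.coeff_derivative, negLogOneSubP, coeff_mk, coeff_mk, if_neg n.succ_ne_zero,
    Pi.one_apply, ← Polynomial.C_eq_natCast, ← Polynomial.C_1, ← Polynomial.C_add,
    ← Polynomial.C_mul]
  push_cast
  field_simp

theorem map_compRingHom_negLogOneSubP (p : ℚ[X]) :
    PowerSeries.map (compRingHom p) negLogOneSubP = negLogOneSubP := by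
  refine PowerSeries.ext fun n => ?_
  simp [negLogOneSubP]

-- Both sides vanish at `0` and have derivative `(1 + t)⁻¹`.
theorem negLogOneSubP_subst_xDivOneAddX :
    negLogOneSubP.subst (xDivOneAddX ℚ[X]) = logOneAddP := by
  apply derivative.ext
  · have hgeom : PowerSeries.mk 1 = (invOneSubPow ℚ[X] 1 : ℚ[X]⟦X⟧) := by
      rw [invOneSubPow_val_succ_eq_mk_add_choose]
      simp only [zero_add, Nat.choose_zero_right, Nat.cast_one]
      rfl
    rw [derivative_subst hasSubst_xDivOneAddX, derivative_negLogOneSubP, derivative_logOneAddP,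
      hgeom, invOneSubPow_subst_xDivOneAddX, derivative_xDivOneAddX, pow_one]
    linear_combination oneAddXInv ℚ[X] * one_add_X_mul_oneAddXInv (R := ℚ[X])
  · rw [logOneAddP_eq_log, constantCoeff_log]
    exact constantCoeff_subst_eq_zero constantCoeff_xDivOneAddX _ (by simp [negLogOneSubP])

theorem eval_binomPoly (N : ℕ) (c : ℚ) :
    (binomPoly N).eval c = (descPochhammer ℚ N).eval c / N.factorial := by
  rw [binomPoly, eval_mul, eval_C, eval_prod, descPochhammer_eval_eq_prod_range]
  simp [div_eq_inv_mul]

theorem eval_natCast_binomPoly (a N : ℕ) : (binomPoly N).eval (a : ℚ) = a.choose N := by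
  rw [eval_binomPoly, descPochhammer_eval_eq_descFactorial,
    Nat.descFactorial_eq_factorial_mul_choose]
  push_cast
  field_simp

theorem neg_one_pow_mul_eval_neg_natCast_binomPoly (a N : ℕ) :
    (-1) ^ N * (binomPoly N).eval (-(a : ℚ)) = (a + N - 1).choose N := by
  rw [eval_binomPoly, ← mul_div_assoc, ← ascPochhammer_eval_neg_eq_descPochhammer, neg_neg,
    ← ascPochhammer_eval_cast, ascPochhammer_nat_eq_ascFactorial,
    Nat.ascFactorial_eq_factorial_mul_choose']
  push_cast
  field_simp

theorem map_eval_natCast_onePlusTX (a : ℕ) :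
    PowerSeries.map (evalRingHom (a : ℚ)) onePlusTX = (1 + PowerSeries.X) ^ a := by
  refine PowerSeries.ext fun N => ?_
  rw [PowerSeries.coeff_map, onePlusTX, coeff_mk, coe_evalRingHom, eval_natCast_binomPoly,
    ← binomialSeries_nat (R := ℤ), binomialSeries_coeff, Ring.choose_natCast]
  simp

theorem map_eval_neg_natCast_oneSubTX (a : ℕ) :
    PowerSeries.map (evalRingHom (-(a : ℚ))) oneSubTX = invOneSubPow ℚ a := by
  refine PowerSeries.ext fun N => ?_
  rw [PowerSeries.coeff_map, oneSubTX, coeff_mk, coe_evalRingHom, eval_mul, eval_pow, eval_neg,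
    eval_one, neg_one_pow_mul_eval_neg_natCast_binomPoly]
  rcases a with _ | d
  · rcases N with _ | N <;> simp [invOneSubPow_zero, PowerSeries.coeff_one]
  · rw [invOneSubPow_val_succ_eq_mk_add_choose, coeff_mk, Nat.choose_symm_add]
    congr 2
    omega

theorem evalRingHom_comp_compRingHom_neg_X (c : ℚ) :
    (evalRingHom c).comp (compRingHom (-Polynomial.X)) = evalRingHom (-c) := by
  ext <;> simp

-- Both sides have polynomial coefficients in `x`; at `x = a ∈ ℕ` the identity reads
-- `(1 - t)^{-a}` at `t/(1+t)` equals `(1 + t)^a`.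
theorem map_compRingHom_neg_X_oneSubTX_subst_xDivOneAddX :
    (PowerSeries.map (compRingHom (-Polynomial.X)) oneSubTX).subst (xDivOneAddX ℚ[X])
      = onePlusTX := by
  refine PowerSeries.ext fun N => Polynomial.eq_of_infinite_eval_eq _ _ ?_
  refine Set.infinite_of_injective_forall_mem Nat.cast_injective fun a => ?_
  calc eval (a : ℚ) (coeff N ((PowerSeries.map (compRingHom (-Polynomial.X)) oneSubTX).subst
          (xDivOneAddX ℚ[X])))
      = coeff N ((PowerSeries.map (evalRingHom (-(a : ℚ))) oneSubTX).subst (xDivOneAddX ℚ)) := by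
        rw [← coe_evalRingHom, ← PowerSeries.coeff_map, map_subst_xDivOneAddX,
          ← RingHom.comp_apply, ← PowerSeries.map_comp, evalRingHom_comp_compRingHom_neg_X]
    _ = eval (a : ℚ) (coeff N onePlusTX) := by
        rw [map_eval_neg_natCast_oneSubTX, invOneSubPow_subst_xDivOneAddX,
          ← map_eval_natCast_onePlusTX, PowerSeries.coeff_map, coe_evalRingHom]

noncomputable def daeheeGF (k : ℕ) : ℚ[X]⟦X⟧ := logOneAddP ^ k * onePlusTX

noncomputable def daeheeSecondKindGF (k : ℕ) : ℚ[X]⟦X⟧ :=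
  ((1 - PowerSeries.X) * negLogOneSubP) ^ k * oneSubTX

theorem map_compRingHom_neg_X_daeheeSecondKindGF_subst_xDivOneAddX (k : ℕ) :
    (PowerSeries.map (compRingHom (-Polynomial.X)) (daeheeSecondKindGF k)).subst
        (xDivOneAddX ℚ[X])
      = oneAddXInv ℚ[X] ^ k * daeheeGF k := by
  have hu := hasSubst_xDivOneAddX (R := ℚ[X])
  rw [daeheeSecondKindGF, daeheeGF, map_mul, map_pow, map_mul, map_sub, map_one,
    PowerSeries.map_X, map_compRingHom_negLogOneSubP, subst_mul hu, subst_pow hu, subst_mul hu,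
    one_sub_X_subst_xDivOneAddX, negLogOneSubP_subst_xDivOneAddX,
    map_compRingHom_neg_X_oneSubTX_subst_xDivOneAddX, mul_pow, mul_assoc]

theorem egf_comp_neg_X_subst_xDivOneAddX {k : ℕ} {D Dh : ℕ → ℚ[X]}
    (hD : daeheeGF k
      = PowerSeries.X ^ k * PowerSeries.mk fun j => Polynomial.C ((j.factorial : ℚ)⁻¹) * D j)
    (hDh : daeheeSecondKindGF k
      = PowerSeries.X ^ k * PowerSeries.mk fun j => Polynomial.C ((j.factorial : ℚ)⁻¹) * Dh j) :
    (PowerSeries.mk fun j => Polynomial.C ((j.factorial : ℚ)⁻¹) * (Dh j).comp (-Polynomial.X)).subst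
        (xDivOneAddX ℚ[X])
      = PowerSeries.mk fun j => Polynomial.C ((j.factorial : ℚ)⁻¹) * D j := by
  have hu := hasSubst_xDivOneAddX (R := ℚ[X])
  have key := map_compRingHom_neg_X_daeheeSecondKindGF_subst_xDivOneAddX k
  have hmap : PowerSeries.map (compRingHom (-Polynomial.X))
      (PowerSeries.mk fun j => Polynomial.C ((j.factorial : ℚ)⁻¹) * Dh j)
        = PowerSeries.mk fun j => Polynomial.C ((j.factorial : ℚ)⁻¹) * (Dh j).comp (-Polynomial.X) :=
    PowerSeries.ext fun j => by simp
  rw [hDh, hD, map_mul, map_pow, PowerSeries.map_X, hmap, subst_mul hu, subst_pow hu, subst_X hu,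
    xDivOneAddX, mul_pow, mul_assoc, mul_left_comm (oneAddXInv ℚ[X] ^ k)] at key
  exact (isUnit_oneAddXInv.pow k).mul_left_cancel (X_pow_mul_injective key)

theorem daehee_poly_eq_sum_daehee_second_kind_poly_neg_general
    (k : ℕ) (n : ℕ) (hn : 1 ≤ n)
    (D : ℕ → Polynomial ℚ)
    (hD : logOneAddP ^ k * onePlusTX
      = PowerSeries.X ^ k
          * PowerSeries.mk (fun j => Polynomial.C ((j.factorial : ℚ)⁻¹) * D j))
    (Dh : ℕ → Polynomial ℚ)
    (hDh : ((1 - PowerSeries.X) * negLogOneSubP) ^ k * oneSubTX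
      = PowerSeries.X ^ k
          * PowerSeries.mk (fun j => Polynomial.C ((j.factorial : ℚ)⁻¹) * Dh j)) :
    Polynomial.C ((-1 : ℚ) ^ n / (n.factorial : ℚ)) * D n
      = ∑ m ∈ Finset.Icc 1 n,
          Polynomial.C ((((n - 1).choose (n - m) : ℚ) / (m.factorial : ℚ)) * (-1 : ℚ) ^ m)
            * (Dh m).comp (-Polynomial.X) := by
  have hcoeff := neg_one_pow_mul_coeff_subst_xDivOneAddX
    (PowerSeries.mk fun j => Polynomial.C ((j.factorial : ℚ)⁻¹) * (Dh j).comp (-Polynomial.X)) hn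
  rw [egf_comp_neg_X_subst_xDivOneAddX hD hDh, coeff_mk] at hcoeff
  calc Polynomial.C ((-1 : ℚ) ^ n / (n.factorial : ℚ)) * D n
      = (-1) ^ n * (Polynomial.C ((n.factorial : ℚ)⁻¹) * D n) := by
        rw [div_eq_mul_inv, map_mul, map_pow, map_neg, map_one, mul_assoc]
    _ = _ := hcoeff
    _ = _ := sum_congr rfl fun m _ => by
        simp only [coeff_mk, div_eq_mul_inv, map_mul, map_pow, map_neg, map_one, map_natCast]
        ring

/-- For `n ≥ 1`, `k ≥ 1`, we have
`(−1)^n D_n^(k)(x)/n! = Σ_{m=1}^n (C(n−1,n−m)/m!) (−1)^m D̂_m^(k)(−x)` in `ℚ[x]`,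
where `D_n^(k)(x)` are the Daehee polynomials of order `k` and `D̂_m^(k)(x)` the Daehee
polynomials of the second kind of order `k`. -/
theorem daehee_poly_eq_sum_daehee_second_kind_poly_neg
    (k : ℕ) (hk : 1 ≤ k) (n : ℕ) (hn : 1 ≤ n)
    (D : ℕ → Polynomial ℚ)
    (hD : logOneAddP ^ k * onePlusTX
      = PowerSeries.X ^ k
          * PowerSeries.mk (fun j => Polynomial.C ((j.factorial : ℚ)⁻¹) * D j))
    (Dh : ℕ → Polynomial ℚ)
    (hDh : ((1 - PowerSeries.X) * negLogOneSubP) ^ k * oneSubTX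
      = PowerSeries.X ^ k
          * PowerSeries.mk (fun j => Polynomial.C ((j.factorial : ℚ)⁻¹) * Dh j)) :
    Polynomial.C ((-1 : ℚ) ^ n / (n.factorial : ℚ)) * D n
      = ∑ m ∈ Finset.Icc 1 n,
          Polynomial.C ((((n - 1).choose (n - m) : ℚ) / (m.factorial : ℚ)) * (-1 : ℚ) ^ m)
            * (Dh m).comp (-Polynomial.X) :=
  daehee_poly_eq_sum_daehee_second_kind_poly_neg_general k n hn D hD Dh hDh
end
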